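/- Let P : ℝⁿ → Matrix (Fin n) (Fin n) ℝ be a continuously differentiable map with P(u) invertible for each u. Let u, δu, ξ : ℝ → ℝⁿ satisfy u' = f(t,u), δu' = Df(t,u) δu, and the fiberwise-preconditioned adjoint equation ξ' = -P(u)⁻ᵀ (Df(t,u))ᵀ P(u)ᵀ ξ - P(u)⁻ᵀ (DP(u)[f(t,u)])ᵀ ξ, where DP(u)[v] denotes the directional derivative of P at u in direction v. Then t ↦ ξ(t)ᵀ P(u(t)) δu(t) is constant. -/

import Mathlib

/-!
The product rule gives `(ξᵀ P(u) δu)' = ξ'ᵀ P(u) δu + ξᵀ DP(u)[u'] δu + ξᵀ P(u) J δu`.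
Moving the matrices of the adjoint equation across the pairing, `(P⁻ᵀ Cᵀ ξ)ᵀ P δu = ξᵀ C δu`,
its two terms become `-ξᵀ P(u) J δu` (with `C = P J`) and `-ξᵀ DP(u)[f] δu` (with `C = DP(u)[f]`),
which cancel the last two summands. A function with vanishing derivative on `ℝ` is constant.
-/

open Matrix

section Calculus

variable {𝕜 : Type*} [NontriviallyNormedField 𝕜] {m n : Type*} {t : 𝕜}

theorem HasDerivAt.dotProduct [Fintype n] {x y : 𝕜 → n → 𝕜} {x' y' : n → 𝕜}
    (hx : HasDerivAt x x' t) (hy : HasDerivAt y y' t) :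
    HasDerivAt (fun s => x s ⬝ᵥ y s) (x' ⬝ᵥ y t + x t ⬝ᵥ y') t := by
  unfold _root_.dotProduct
  rw [← Finset.sum_add_distrib]
  exact HasDerivAt.fun_sum fun i _ =>
    (hasDerivAt_pi.mp hx i).mul (hasDerivAt_pi.mp hy i)

theorem HasDerivAt.mulVec [Fintype n] {A : 𝕜 → Matrix m n 𝕜} {A' : Matrix m n 𝕜}
    {v : 𝕜 → n → 𝕜} {v' : n → 𝕜} (hA : ∀ i j, HasDerivAt (fun s => A s i j) (A' i j) t)
    (hv : HasDerivAt v v' t) :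
    HasDerivAt (fun s => A s *ᵥ v s) (A' *ᵥ v t + A t *ᵥ v') t :=
  hasDerivAt_pi.mpr fun i => (hasDerivAt_pi.mpr (hA i)).dotProduct hv

theorem HasDerivAt.matrix_entry_comp {E : Type*} [NormedAddCommGroup E] [NormedSpace 𝕜 E]
    {P : E → Matrix m n 𝕜} {P' : Matrix m n 𝕜} {u : 𝕜 → E} {u' : E}
    (hP : ∀ i j, DifferentiableAt 𝕜 (fun w => P w i j) (u t))
    (hP' : ∀ i j, fderiv 𝕜 (fun w => P w i j) (u t) u' = P' i j)
    (hu : HasDerivAt u u' t) (i : m) (j : n) :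
    HasDerivAt (fun s => P (u s) i j) (P' i j) t :=
  hP' i j ▸ (hP i j).hasFDerivAt.comp_hasDerivAt t hu

end Calculus

theorem Matrix.inv_transpose_mul_transpose_mulVec_dotProduct {R : Type*} [CommRing R]
    {l m : Type*} [Fintype l] [Fintype m] [DecidableEq m] {A : Matrix m m R}
    (hA : IsUnit A.det) (C : Matrix l m R) (x : l → R) (v : m → R) :
    (A⁻¹ᵀ * Cᵀ) *ᵥ x ⬝ᵥ A *ᵥ v = x ⬝ᵥ C *ᵥ v := by
  rw [← vecMul_transpose, ← dotProduct_mulVec, transpose_mul, transpose_transpose,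
    transpose_transpose, mulVec_mulVec, nonsing_inv_mul_cancel_right _ _ hA]

theorem Matrix.adjoint_derivative_dotProduct_add_eq_zero {R : Type*} [CommRing R]
    {m : Type*} [Fintype m] [DecidableEq m] {A : Matrix m m R} (hA : IsUnit A.det)
    (J M : Matrix m m R) (ξ δ : m → R) :
    (-((A⁻¹ᵀ * Jᵀ * Aᵀ) *ᵥ ξ) - (A⁻¹ᵀ * Mᵀ) *ᵥ ξ) ⬝ᵥ A *ᵥ δ + ξ ⬝ᵥ (M *ᵥ δ + A *ᵥ J *ᵥ δ)
      = 0 := by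
  rw [Matrix.mul_assoc, ← transpose_mul, sub_dotProduct, neg_dotProduct,
    inv_transpose_mul_transpose_mulVec_dotProduct hA,
    inv_transpose_mul_transpose_mulVec_dotProduct hA, mulVec_mulVec, dotProduct_add]
  abel

theorem fiberwise_preconditioned_adjoint_conservation_general {n : ℕ}
    (P : (Fin n → ℝ) → Matrix (Fin n) (Fin n) ℝ)
    (DP : (Fin n → ℝ) → (Fin n → ℝ) → Matrix (Fin n) (Fin n) ℝ)
    (hPinv : ∀ v, IsUnit (P v).det)
    (hPdiff : ∀ i j, ContDiff ℝ 1 (fun w => P w i j))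
    (hDP : ∀ v w i j, fderiv ℝ (fun z => P z i j) v w = DP v w i j)
    (f : ℝ → (Fin n → ℝ) → (Fin n → ℝ))
    (J : ℝ → Matrix (Fin n) (Fin n) ℝ)
    (u δu ξ : ℝ → Fin n → ℝ)
    (hu : ∀ t, HasDerivAt u (f t (u t)) t)
    (hδu : ∀ t, HasDerivAt δu ((J t).mulVec (δu t)) t)
    (hξ : ∀ t, HasDerivAt ξ
      (-((((P (u t))⁻¹)ᵀ * (J t)ᵀ * (P (u t))ᵀ).mulVec (ξ t))
        - ((((P (u t))⁻¹)ᵀ * (DP (u t) (f t (u t)))ᵀ).mulVec (ξ t))) t) :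
    ∀ s t : ℝ, ξ s ⬝ᵥ ((P (u s)).mulVec (δu s)) = ξ t ⬝ᵥ ((P (u t)).mulVec (δu t)) := by
  have hpairing : ∀ t, HasDerivAt (fun t => ξ t ⬝ᵥ P (u t) *ᵥ δu t) 0 t := by
    intro t
    have hPu := HasDerivAt.matrix_entry_comp
      (fun i j => (hPdiff i j).differentiable one_ne_zero (u t)) (hDP _ _) (hu t)
    have hderiv := (hξ t).dotProduct (HasDerivAt.mulVec hPu (hδu t))
    rwa [adjoint_derivative_dotProduct_add_eq_zero (hPinv (u t))] at hderiv
  exact is_const_of_deriv_eq_zero (fun t => (hpairing t).differentiableAt)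
    fun t => (hpairing t).deriv

/-- Conservation law for the fiberwise-preconditioned adjoint equation with a
state-dependent duality pairing `⟨p,v⟩_{P(u)} = pᵀ P(u) v`: if `u' = f(t,u)`,
`δu' = Df(t,u) δu`, and `ξ' = -P(u)⁻ᵀ (Df)ᵀ P(u)ᵀ ξ - P(u)⁻ᵀ (DP(u)[f(t,u)])ᵀ ξ`,
then `ξᵀ P(u) δu` is constant. -/
theorem fiberwise_preconditioned_adjoint_conservation {n : ℕ}
    (P : (Fin n → ℝ) → Matrix (Fin n) (Fin n) ℝ)
    (DP : (Fin n → ℝ) → (Fin n → ℝ) → Matrix (Fin n) (Fin n) ℝ)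
    (hPinv : ∀ v, IsUnit (P v).det)
    (hPdiff : ∀ i j, ContDiff ℝ 1 (fun w => P w i j))
    (hDP : ∀ v w i j, fderiv ℝ (fun z => P z i j) v w = DP v w i j)
    (f : ℝ → (Fin n → ℝ) → (Fin n → ℝ))
    (J : ℝ → Matrix (Fin n) (Fin n) ℝ)
    (u δu ξ : ℝ → Fin n → ℝ)
    (hf : ∀ t, ContDiff ℝ 1 (f t))
    (hJ : ∀ t, HasFDerivAt (f t) (Matrix.mulVecLin (J t)).toContinuousLinearMap (u t))
    (hu : ∀ t, HasDerivAt u (f t (u t)) t)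
    (hδu : ∀ t, HasDerivAt δu ((J t).mulVec (δu t)) t)
    (hξ : ∀ t, HasDerivAt ξ
      (-((((P (u t))⁻¹)ᵀ * (J t)ᵀ * (P (u t))ᵀ).mulVec (ξ t))
        - ((((P (u t))⁻¹)ᵀ * (DP (u t) (f t (u t)))ᵀ).mulVec (ξ t))) t) :
    ∀ s t : ℝ, ξ s ⬝ᵥ ((P (u s)).mulVec (δu s)) = ξ t ⬝ᵥ ((P (u t)).mulVec (δu t)) :=
  fiberwise_preconditioned_adjoint_conservation_general P DP hPinv hPdiff hDP f J u δu ξ hu hδu hξ
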